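/- For any even n ≥ 6, the product (r_n r_3)^4 equals the identity permutation of {1,...,n}; hence the Cayley graph Cay(Sym_n, {r_3, r_{n-2}, r_n}) contains a cycle of length 8. -/

import Mathlib

/-!
Write `g = r_n r_3`. Since both factors are involutions, `g⁴ = (c r_3)²` where `c = r_n r_3 r_n`
is again an involution, and `g⁴ = 1` as soon as `c` and `r_3` commute. Conjugating by `r_n`
turns the reversal of the first three entries into the reversal of the last three, which moves
nothing that `r_3` moves once `n ≥ 6`.
-/

/-- The prefix-reversal `r_m` on `{1, ..., n}` (encoded as `Fin n`, 0-indexed):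
the 1-indexed entry `j` with `j ≤ m` is sent to `m + 1 - j`, and entries `j > m`
are fixed.  If `m > n` it is the identity. -/
def pancakeRev (n m : ℕ) : Equiv.Perm (Fin n) :=
  Function.Involutive.toPerm
    (fun a => if h : a.val < m ∧ m ≤ n then ⟨m - 1 - a.val, by omega⟩ else a)
    (by
      intro a
      beta_reduce
      by_cases h : a.val < m ∧ m ≤ n
      · rw [dif_pos h]
        have h2 : m - 1 - a.val < m ∧ m ≤ n := by omega
        rw [dif_pos h2]
        apply Fin.ext
        simp
        omega
      · rw [dif_neg h, dif_neg h])

theorem pow_four_eq_one_of_commute_conj {G : Type*} [Group G] {a b : G} (ha : a * a = 1)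
    (hb : b * b = 1) (h : Commute (b * a * b) a) : (b * a) ^ 4 = 1 := by
  have hb_inv : b⁻¹ = b := inv_eq_of_mul_eq_one_right hb
  have hconj : (b * a * b) ^ 2 = 1 :=
    calc (b * a * b) ^ 2 = (b * a * b⁻¹) ^ 2 := by rw [hb_inv]
      _ = 1 := by rw [conj_pow, sq, ha, mul_one, mul_inv_cancel]
  calc (b * a) ^ 4 = (b * a * b * a) ^ 2 := by
        rw [show 4 = 2 * 2 from rfl, pow_mul, sq (b * a), ← mul_assoc]
    _ = 1 := by rw [h.mul_pow, hconj, sq a, ha, one_mul]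

lemma pancakeRev_val (n m : ℕ) (a : Fin n) :
    (pancakeRev n m a).val = if a.val < m ∧ m ≤ n then m - 1 - a.val else a.val := by
  show (dite _ _ _ : Fin n).val = _
  split_ifs <;> rfl

lemma pancakeRev_mul_self (n m : ℕ) : pancakeRev n m * pancakeRev n m = 1 :=
  Equiv.ext fun a => by
    rw [Equiv.Perm.mul_apply, Equiv.Perm.one_apply]
    exact Function.Involutive.toPerm_involutive _ a

lemma pancakeRev_conj_disjoint {n m k : ℕ} (h : k + m ≤ n) :
    (pancakeRev n n * pancakeRev n m * pancakeRev n n).Disjoint (pancakeRev n k) := by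
  intro a
  by_cases ha : a.val < k
  · -- `r_n` sends `a` to a position `≥ n - k ≥ m`, which `r_m` fixes.
    left
    ext
    simp only [Equiv.Perm.mul_apply, pancakeRev_val]
    split_ifs <;> omega
  · right
    ext
    rw [pancakeRev_val, if_neg (by omega)]

theorem pancake_C8_BS3_general (n : ℕ) (hn : 6 ≤ n) :
    (pancakeRev n n * pancakeRev n 3) ^ 4 = 1 :=
  pow_four_eq_one_of_commute_conj (pancakeRev_mul_self n 3) (pancakeRev_mul_self n n)
    (pancakeRev_conj_disjoint (by omega)).commute

theorem pancake_C8_BS3 (n : ℕ) (heven : Even n) (hn : 6 ≤ n) :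
    (pancakeRev n n * pancakeRev n 3) ^ 4 = 1 :=
  pancake_C8_BS3_general n hn
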